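/- (Shadow bound) Let Λ be an operator with 0 ≤ Λ ≤ I and ρ a density operator on ℂ^D such that for some λ, μ₁, μ₂ > 0 one has Tr(ρΛ) ≥ 1 − λ and μ₁Λ ≤ √Λ ρ √Λ ≤ μ₂Λ. Then (1−λ)/μ₂ ≤ Tr Λ ≤ 1/μ₁. Moreover, for every operator B with 0 ≤ B ≤ I and Tr(ρB) ≥ η one has Tr B ≥ (η − √(8λ))/μ₂; if in addition ρ and Λ commute, then Tr B ≥ (η − λ)/μ₂. -/

import Mathlib

/-!
Write `A = √Λ` and `S = AρA`, so that `Tr S = Tr(ρΛ) ∈ [1 - λ, 1]`; tracing `μ₁Λ ≤ S ≤ μ₂Λ`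
bounds `Tr Λ`. For a shadow `B`, `Tr(SB) ≤ μ₂ Tr(ΛB) ≤ μ₂ Tr B`, so it remains to bound the
defect `Tr((ρ - S)B)`. With `T = 1 - A` one has `ρ - S = Tρ + AρT`, and both terms are values of
the positive functional `X ↦ Tr(ρX)` to which Cauchy–Schwarz applies: one factor is
`Tr(ρT²) ≤ Tr(ρ(1 - Λ)) ≤ λ` (as `T² ≤ 1 - A²`), the other involves a contraction. This gives
`2√λ ≤ √(8λ)`. If `ρ` commutes with `Λ`, it commutes with `A`, so `ρ - S = ρ(1 - Λ) ≥ 0` and the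
defect is at most `Tr(ρ(1 - Λ)) ≤ λ`.
-/

open scoped ComplexOrder Matrix

namespace QIT

variable {d : ℕ}

/-- The positive semidefinite square root of a positive semidefinite matrix (the definition
`Matrix.PosSemidef.sqrt` of the older Mathlib, which has since been removed). -/
noncomputable def _root_.Matrix.PosSemidef.sqrt {n : Type*} [Fintype n] [DecidableEq n]
    {A : Matrix n n ℂ} (hA : A.PosSemidef) : Matrix n n ℂ :=
  (hA.1.eigenvectorUnitary : Matrix n n ℂ) *
    Matrix.diagonal (fun i => ((Real.sqrt (hA.1.eigenvalues i) : ℝ) : ℂ)) *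
    (star hA.1.eigenvectorUnitary : Matrix n n ℂ)

/-- A density operator: positive semidefinite with trace 1. -/
def IsDensity (ρ : Matrix (Fin d) (Fin d) ℂ) : Prop :=
  ρ.PosSemidef ∧ ρ.trace = 1

/-- A pure state: a rank-one orthogonal projection. -/
def IsPure (ρ : Matrix (Fin d) (Fin d) ℂ) : Prop :=
  ρ.IsHermitian ∧ ρ * ρ = ρ ∧ ρ.rank = 1

/-- Trace norm of a matrix: `Tr √(Aᴴ A)`. -/
noncomputable def traceNorm (A : Matrix (Fin d) (Fin d) ℂ) : ℝ :=
  ((Matrix.posSemidef_conjTranspose_mul_self A).sqrt.trace).re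

end QIT

open scoped MatrixOrder Matrix.Norms.L2Operator

namespace PositiveLinearMap

section NonUnital

variable {A : Type*} [NonUnitalCStarAlgebra A] [PartialOrder A] [StarOrderedRing A]

/-- Cauchy–Schwarz for the GNS semi-inner product `⟪a, b⟫ = f (star a * b)`. -/
theorem norm_apply_star_mul_le (f : A →ₚ[ℂ] ℂ) (a b : A) :
    ‖f (star a * b)‖ ≤ √(f (star a * a)).re * √(f (star b * b)).re :=
  norm_inner_le_norm (𝕜 := ℂ) (f.toPreGNS a) (f.toPreGNS b)

end NonUnital

variable {A : Type*} [CStarAlgebra A] [PartialOrder A] [StarOrderedRing A]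

theorem apply_star_mul_self_le_apply_one (f : A →ₚ[ℂ] ℂ) {b : A} (hb : ‖b‖ ≤ 1) :
    f (star b * b) ≤ f 1 := by
  refine OrderHomClass.mono f ((CStarAlgebra.norm_le_one_iff_of_nonneg _).1 ?_)
  rw [CStarRing.norm_star_mul_self]
  exact mul_le_one₀ hb (norm_nonneg b) hb

end PositiveLinearMap

namespace CStarAlgebra

variable {A : Type*} [CStarAlgebra A] [PartialOrder A] [StarOrderedRing A]

theorem mul_self_le_self {a : A} (ha₀ : 0 ≤ a) (ha₁ : a ≤ 1) : a * a ≤ a := by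
  simpa [sq] using pow_antitone ha₀ ha₁ one_le_two

theorem one_sub_mul_one_sub_le {a : A} (ha₀ : 0 ≤ a) (ha₁ : a ≤ 1) :
    (1 - a) * (1 - a) ≤ 1 - a * a := by
  have h := mul_self_le_self ha₀ ha₁
  have e : 1 - a * a - (1 - a) * (1 - a) = (a - a * a) + (a - a * a) := by noncomm_ring
  rw [← sub_nonneg, e]
  exact add_nonneg (sub_nonneg.2 h) (sub_nonneg.2 h)

end CStarAlgebra

namespace Matrix

variable {n : Type*} [Fintype n]

theorem re_trace_le_re_trace {X Y : Matrix n n ℂ} (h : X ≤ Y) : X.trace.re ≤ Y.trace.re :=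
  Complex.re_le_re (OrderHomClass.mono (tracePositiveLinearMap n ℂ ℂ) h)

variable [DecidableEq n]

theorem PosSemidef.sqrt_eq_cfcSqrt {A : Matrix n n ℂ} (hA : A.PosSemidef) :
    hA.sqrt = CFC.sqrt A := by
  rw [CFC.sqrt_eq_real_sqrt A hA.nonneg, cfcₙ_eq_cfc, hA.1.cfc_eq, IsHermitian.cfc,
    Unitary.conjStarAlgAut_apply]
  rfl

theorem trace_mul_nonneg {X Y : Matrix n n ℂ} (hX : 0 ≤ X) (hY : 0 ≤ Y) :
    0 ≤ (X * Y).trace := by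
  rw [← CFC.sqrt_mul_sqrt_self X, mul_assoc, trace_mul_comm]
  exact (nonneg_iff_posSemidef.1 (conjugate_nonneg_of_nonneg hY (CFC.sqrt_nonneg X))).trace_nonneg

noncomputable def traceMulLeft (ρ : Matrix n n ℂ) (hρ : 0 ≤ ρ) : Matrix n n ℂ →ₚ[ℂ] ℂ :=
  .mk₀ (traceLinearMap n ℂ ℂ ∘ₗ LinearMap.mulLeft ℂ ρ) fun _ hX ↦ trace_mul_nonneg hρ hX

@[simp]
theorem traceMulLeft_apply (ρ : Matrix n n ℂ) (hρ : 0 ≤ ρ) (X : Matrix n n ℂ) :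
    traceMulLeft ρ hρ X = (ρ * X).trace :=
  rfl

theorem trace_mul_le_trace_mul_of_nonneg_left {P X Y : Matrix n n ℂ} (h : X ≤ Y) (hP : 0 ≤ P) :
    (P * X).trace ≤ (P * Y).trace :=
  OrderHomClass.mono (traceMulLeft P hP) h

theorem re_trace_mul_le_of_le_smul {S Λ B : Matrix n n ℂ} {μ : ℝ} (hμ : 0 ≤ μ)
    (hS : S ≤ μ • Λ) (hΛ : Λ ≤ 1) (hB : 0 ≤ B) : (S * B).trace.re ≤ μ * B.trace.re :=
  calc (S * B).trace.re = (B * S).trace.re := by rw [trace_mul_comm]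
    _ ≤ (B * (μ • Λ)).trace.re :=
        Complex.re_le_re (trace_mul_le_trace_mul_of_nonneg_left hS hB)
    _ = μ * (B * Λ).trace.re := by simp [trace_smul]
    _ ≤ μ * (B * 1).trace.re :=
        mul_le_mul_of_nonneg_left
          (Complex.re_le_re (trace_mul_le_trace_mul_of_nonneg_left hΛ hB)) hμ
    _ = μ * B.trace.re := by rw [mul_one]

theorem re_trace_sub_conj_mul_le {ρ A B : Matrix n n ℂ} (hρ : 0 ≤ ρ) (hA₀ : 0 ≤ A)
    (hA₁ : A ≤ 1) (hB₀ : 0 ≤ B) (hB₁ : B ≤ 1) :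
    ((ρ - A * ρ * A) * B).trace.re ≤ 2 * √(ρ * (1 - A * A)).trace.re * √ρ.trace.re := by
  set ω := traceMulLeft ρ hρ
  set T := 1 - A
  have hT : star T = T := by simp [T, hA₀.isSelfAdjoint.star_eq]
  have hB : star B = B := hB₀.isSelfAdjoint.star_eq
  have hsplit : ((ρ - A * ρ * A) * B).trace = ω (star B * T) + ω (star T * (B * A)) :=
    calc ((ρ - A * ρ * A) * B).trace = (T * (ρ * B)).trace + (A * (ρ * (T * B))).trace := by
          rw [← trace_add]; congr 1; simp only [T]; noncomm_ring
      _ = ω (star B * T) + ω (star T * (B * A)) := by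
          rw [trace_mul_comm T, trace_mul_comm A, hT, hB]
          simp only [ω, traceMulLeft_apply, mul_assoc]
  have hωT : (ω (star T * T)).re ≤ (ρ * (1 - A * A)).trace.re := by
    rw [hT]
    exact Complex.re_le_re (OrderHomClass.mono ω (CStarAlgebra.one_sub_mul_one_sub_le hA₀ hA₁))
  have hcontraction {X : Matrix n n ℂ} (hX : ‖X‖ ≤ 1) : (ω (star X * X)).re ≤ ρ.trace.re := by
    simpa [ω] using Complex.re_le_re (ω.apply_star_mul_self_le_apply_one hX)
  have hB_norm : ‖B‖ ≤ 1 := (CStarAlgebra.norm_le_one_iff_of_nonneg B).2 hB₁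
  have hA_norm : ‖A‖ ≤ 1 := (CStarAlgebra.norm_le_one_iff_of_nonneg A).2 hA₁
  have hBA_norm : ‖B * A‖ ≤ 1 :=
    (norm_mul_le B A).trans (mul_le_one₀ hB_norm (norm_nonneg A) hA_norm)
  calc ((ρ - A * ρ * A) * B).trace.re
      = (ω (star B * T)).re + (ω (star T * (B * A))).re := by rw [hsplit, Complex.add_re]
    _ ≤ ‖ω (star B * T)‖ + ‖ω (star T * (B * A))‖ :=
        add_le_add (Complex.re_le_norm _) (Complex.re_le_norm _)
    _ ≤ √(ω (star B * B)).re * √(ω (star T * T)).re +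
          √(ω (star T * T)).re * √(ω (star (B * A) * (B * A))).re :=
        add_le_add (ω.norm_apply_star_mul_le _ _) (ω.norm_apply_star_mul_le _ _)
    _ ≤ √ρ.trace.re * √(ρ * (1 - A * A)).trace.re +
          √(ρ * (1 - A * A)).trace.re * √ρ.trace.re := by
        gcongr √?_ * √?_ + √?_ * √?_
        exacts [hcontraction hB_norm, hcontraction hBA_norm]
    _ = 2 * √(ρ * (1 - A * A)).trace.re * √ρ.trace.re := by ring

theorem re_trace_sub_conj_mul_le_of_commute {ρ A B : Matrix n n ℂ} (hρ : 0 ≤ ρ) (hA₀ : 0 ≤ A)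
    (hA₁ : A ≤ 1) (hB₁ : B ≤ 1) (h : Commute A ρ) :
    ((ρ - A * ρ * A) * B).trace.re ≤ (ρ * (1 - A * A)).trace.re := by
  have hconj : ρ - A * ρ * A = ρ * (1 - A * A) := by
    rw [h.eq, mul_sub, mul_one, mul_assoc]
  have hAA : A * A ≤ 1 := (CStarAlgebra.mul_self_le_self hA₀ hA₁).trans hA₁
  have hP : 0 ≤ ρ * (1 - A * A) :=
    Commute.mul_nonneg hρ (sub_nonneg.2 hAA)
      ((Commute.one_right ρ).sub_right (h.symm.mul_right h.symm))
  rw [hconj]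
  simpa using Complex.re_le_re (trace_mul_le_trace_mul_of_nonneg_left hB₁ hP)

end Matrix

namespace QIT

open Matrix

theorem shadow_bound_general {D : ℕ} (Λ ρ : Matrix (Fin D) (Fin D) ℂ)
    (hΛ : Λ.PosSemidef) (hΛ1 : (1 - Λ).PosSemidef) (hρ : IsDensity ρ)
    (lam μ₁ μ₂ : ℝ) (hμ₁ : 0 < μ₁) (hμ₂ : 0 < μ₂)
    (htr : 1 - lam ≤ ((ρ * Λ).trace).re)
    (hlow : (hΛ.sqrt * ρ * hΛ.sqrt - (μ₁ : ℝ) • Λ).PosSemidef)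
    (hup : ((μ₂ : ℝ) • Λ - hΛ.sqrt * ρ * hΛ.sqrt).PosSemidef) :
    ((1 - lam) / μ₂ ≤ (Λ.trace).re ∧ (Λ.trace).re ≤ 1 / μ₁) ∧
      ∀ (η : ℝ) (B : Matrix (Fin D) (Fin D) ℂ),
        B.PosSemidef → (1 - B).PosSemidef → η ≤ ((ρ * B).trace).re →
          (η - Real.sqrt (8 * lam)) / μ₂ ≤ (B.trace).re ∧
            (ρ * Λ = Λ * ρ → (η - lam) / μ₂ ≤ (B.trace).re) := by
  obtain ⟨hρ₀, hρ₁⟩ := hρ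
  rw [hΛ.sqrt_eq_cfcSqrt] at hlow hup
  set A := CFC.sqrt Λ
  have hA₀ : 0 ≤ A := CFC.sqrt_nonneg Λ
  have hA₁ : A ≤ 1 := by simpa using CFC.sqrt_le_sqrt Λ 1 hΛ1
  have hAA : A * A = Λ := CFC.sqrt_mul_sqrt_self Λ hΛ.nonneg
  have hS : (A * ρ * A).trace = (ρ * Λ).trace := by
    rw [trace_mul_cycle, hAA, trace_mul_comm]
  have hρΛ : (ρ * Λ).trace.re ≤ 1 := by
    simpa [hρ₁] using Complex.re_le_re (trace_mul_le_trace_mul_of_nonneg_left hΛ1 hρ₀.nonneg)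
  have hlam : (ρ * (1 - A * A)).trace.re ≤ lam := by
    rw [hAA, mul_sub, trace_sub, mul_one, hρ₁, Complex.sub_re, Complex.one_re]
    linarith
  have hS_le : (ρ * Λ).trace.re ≤ μ₂ * Λ.trace.re := by
    simpa [hS] using re_trace_le_re_trace hup
  have hS_ge : μ₁ * Λ.trace.re ≤ (ρ * Λ).trace.re := by
    simpa [hS] using re_trace_le_re_trace hlow
  refine ⟨⟨by rw [div_le_iff₀ hμ₂]; linarith, by rw [le_div_iff₀ hμ₁]; linarith⟩,
    fun η B hB₀ hB₁ hη ↦ ?_⟩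
  have hSB := re_trace_mul_le_of_le_smul hμ₂.le hup hΛ1 hB₀.nonneg
  have hsplit :
      (ρ * B).trace.re = (A * ρ * A * B).trace.re + ((ρ - A * ρ * A) * B).trace.re := by
    rw [sub_mul, trace_sub, Complex.sub_re]; ring
  refine ⟨?_, fun hcomm ↦ ?_⟩
  · have hgentle := re_trace_sub_conj_mul_le hρ₀.nonneg hA₀ hA₁ hB₀.nonneg hB₁
    rw [hρ₁, Complex.one_re, Real.sqrt_one, mul_one] at hgentle
    have h8 : 2 * √(ρ * (1 - A * A)).trace.re ≤ √(8 * lam) := by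
      rw [Real.sqrt_mul (by norm_num)]
      gcongr
      rw [Real.le_sqrt] <;> norm_num
    rw [div_le_iff₀ hμ₂]; linarith
  · have hAρ : Commute A ρ := Commute.cfcₙ_nnreal (a := Λ) hcomm.symm NNReal.sqrt
    have := re_trace_sub_conj_mul_le_of_commute hρ₀.nonneg hA₀ hA₁ hB₁ hAρ
    rw [div_le_iff₀ hμ₂]; linarith

/-- Shadow bound: if `0 ≤ Λ ≤ I`, `Tr(ρΛ) ≥ 1 − λ` and
`μ₁Λ ≤ √Λ ρ √Λ ≤ μ₂Λ`, then `(1−λ)/μ₂ ≤ Tr Λ ≤ 1/μ₁`, and every `η`-shadow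
`B` of `ρ` satisfies `Tr B ≥ (η − √(8λ))/μ₂` (and `Tr B ≥ (η − λ)/μ₂` if `ρ`
and `Λ` commute). -/
theorem shadow_bound {D : ℕ} (Λ ρ : Matrix (Fin D) (Fin D) ℂ)
    (hΛ : Λ.PosSemidef) (hΛ1 : (1 - Λ).PosSemidef) (hρ : IsDensity ρ)
    (lam μ₁ μ₂ : ℝ) (hlam : 0 < lam) (hμ₁ : 0 < μ₁) (hμ₂ : 0 < μ₂)
    (htr : 1 - lam ≤ ((ρ * Λ).trace).re)
    (hlow : (hΛ.sqrt * ρ * hΛ.sqrt - (μ₁ : ℝ) • Λ).PosSemidef)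
    (hup : ((μ₂ : ℝ) • Λ - hΛ.sqrt * ρ * hΛ.sqrt).PosSemidef) :
    ((1 - lam) / μ₂ ≤ (Λ.trace).re ∧ (Λ.trace).re ≤ 1 / μ₁) ∧
      ∀ (η : ℝ) (B : Matrix (Fin D) (Fin D) ℂ),
        B.PosSemidef → (1 - B).PosSemidef → η ≤ ((ρ * B).trace).re →
          (η - Real.sqrt (8 * lam)) / μ₂ ≤ (B.trace).re ∧
            (ρ * Λ = Λ * ρ → (η - lam) / μ₂ ≤ (B.trace).re) :=
  shadow_bound_general Λ ρ hΛ hΛ1 hρ lam μ₁ μ₂ hμ₁ hμ₂ htr hlow hup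

end QIT
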